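/- Let ρ be a positive semidefinite Hermitian matrix on a bipartite system with Tr ρ = 1 (a density matrix), and let σ̄ = (Tr ρ^{(2)})⁻¹ • ρ^{(2)} be the normalized Choi reduced matrix (note Tr ρ^{(2)} = Tr ρ² > 0). Then for every integer k ≥ 2, the even Rényi negativity satisfies log Re Tr((ρ^{T_B})^{2k}) = −(k−1)·S_k(σ̄) − k·S₂(ρ), where S_n(M) = (1/(1−n))·log Re Tr(Mⁿ) denotes the n-th Rényi entropy of a density matrix M. -/

import Mathlib

open Matrix ComplexOrder

/-- The partial transpose on the second factor of a bipartite system. -/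
def partialTranspose {α β : Type*} (ρ : Matrix (α × β) (α × β) ℂ) :
    Matrix (α × β) (α × β) ℂ :=
  fun p q => ρ (p.1, q.2) (q.1, p.2)

/-- The Choi reduced matrix `ρ^{(2)}` of `ρ`. -/
noncomputable def choiReduced {α β : Type*} [Fintype α] [Fintype β]
    (ρ : Matrix (α × β) (α × β) ℂ) : Matrix (α × β) (α × β) ℂ :=
  fun p q => ∑ i' : α, ∑ m : β, ρ (p.1, m) (i', p.2) * star (ρ (q.1, m) (i', q.2))

/-- The `n`-th Rényi entropy `S_n(M) = (1/(1−n))·log Re Tr(Mⁿ)` of a density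
matrix `M`, for `n ≠ 1`. -/
noncomputable def renyiEntropy {γ : Type*} [Fintype γ] [DecidableEq γ] (n : ℕ) (M : Matrix γ γ ℂ) : ℝ :=
  (1 / (1 - (n : ℝ))) * Real.log ((M ^ n).trace.re)

/-!
Since `ρ` is Hermitian, `ρ^{(2)} = ρ^{T_B} (ρ^{T_B})ᴴ = (ρ^{T_B})²`, and partial transposition
preserves `Tr (X Y)`, so `Tr ρ^{(2)} = Tr ρ²`. Hence `Tr σ̄^k = Tr (ρ^{T_B})^{2k} / (Tr ρ²)^k`, and the
identity is the logarithm of this equation. The logarithm splits because both traces are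
positive: `Tr A^{2k} = Tr ((A^k)ᴴ A^k)` for Hermitian `A`, and a nonzero Hermitian matrix is not
nilpotent. For `ρ = 0` both sides are the junk value `Real.log 0 = 0`.
-/

namespace Matrix.IsHermitian

variable {n : Type*} [Fintype n] [DecidableEq n]

lemma eq_zero_of_pow_eq_zero {R : Type*} [Ring R] [PartialOrder R] [StarRing R]
    [StarOrderedRing R] [NoZeroDivisors R] {A : Matrix n n R} (hA : A.IsHermitian) {k : ℕ}
    (h : A ^ k = 0) : A = 0 := by
  suffices ∀ m, A ^ 2 ^ m = 0 → A = 0 from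
    this k (pow_eq_zero_of_le (Nat.lt_two_pow_self (n := k)).le h)
  intro m
  induction m with
  | zero => simp
  | succ m ih =>
    intro h
    apply ih
    rwa [← conjTranspose_mul_self_eq_zero, (hA.pow _).eq, ← pow_add, ← two_mul, ← pow_succ']

lemma trace_pow_two_mul_pos {A : Matrix n n ℂ} (hA : A.IsHermitian) (h0 : A ≠ 0) (k : ℕ) :
    0 < (A ^ (2 * k)).trace := by
  rw [show A ^ (2 * k) = (A ^ k)ᴴ * A ^ k by rw [(hA.pow k).eq, ← pow_add, two_mul]]
  refine lt_of_le_of_ne (posSemidef_conjTranspose_mul_self (A ^ k)).trace_nonneg (Ne.symm ?_)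
  rw [Ne, trace_conjTranspose_mul_self_eq_zero_iff]
  exact fun h => h0 (hA.eq_zero_of_pow_eq_zero h)

end Matrix.IsHermitian

section Renyi

variable {γ : Type*} [Fintype γ] [DecidableEq γ]

lemma neg_sub_one_mul_renyiEntropy {n : ℕ} (hn : n ≠ 1) (M : Matrix γ γ ℂ) :
    -((n : ℝ) - 1) * renyiEntropy n M = Real.log ((M ^ n).trace.re) := by
  have : (1 : ℝ) - n ≠ 0 := sub_ne_zero.2 (by exact_mod_cast hn.symm)
  rw [renyiEntropy, ← neg_sub, neg_neg, ← mul_assoc, mul_one_div_cancel this, one_mul]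

lemma renyiEntropy_two (M : Matrix γ γ ℂ) :
    renyiEntropy 2 M = -Real.log ((M ^ 2).trace.re) := by
  norm_num [renyiEntropy]

end Renyi

section Bipartite

variable {α β : Type*}

@[simp]
lemma partialTranspose_partialTranspose (ρ : Matrix (α × β) (α × β) ℂ) :
    partialTranspose (partialTranspose ρ) = ρ :=
  rfl

@[simp]
lemma partialTranspose_zero : partialTranspose (0 : Matrix (α × β) (α × β) ℂ) = 0 :=
  rfl

lemma isHermitian_partialTranspose {ρ : Matrix (α × β) (α × β) ℂ} (hρ : ρ.IsHermitian) :
    (partialTranspose ρ).IsHermitian := by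
  ext p q
  simp only [conjTranspose_apply, partialTranspose]
  exact hρ.apply _ _

variable [Fintype α] [Fintype β]

lemma choiReduced_eq_mul_conjTranspose (ρ : Matrix (α × β) (α × β) ℂ) :
    choiReduced ρ = partialTranspose ρ * (partialTranspose ρ)ᴴ := by
  ext p q
  simp [choiReduced, partialTranspose, mul_apply, Fintype.sum_prod_type]

lemma trace_partialTranspose_mul (ρ σ : Matrix (α × β) (α × β) ℂ) :
    (partialTranspose ρ * partialTranspose σ).trace = (ρ * σ).trace := by
  simp only [trace, diag_apply, mul_apply, partialTranspose, Fintype.sum_prod_type]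
  refine Finset.sum_congr rfl fun a _ => ?_
  rw [Finset.sum_comm]
  conv_rhs => rw [Finset.sum_comm]
  exact Finset.sum_congr rfl fun a' _ => Finset.sum_comm

variable [DecidableEq α] [DecidableEq β]

lemma trace_normalized_choiReduced_pow {ρ : Matrix (α × β) (α × β) ℂ} (hρ : ρ.IsHermitian)
    (k : ℕ) : ((((choiReduced ρ).trace)⁻¹ • choiReduced ρ) ^ k).trace =
      (partialTranspose ρ ^ (2 * k)).trace / (ρ ^ 2).trace ^ k := by
  have hT := isHermitian_partialTranspose hρ
  have htr : (choiReduced ρ).trace = (ρ ^ 2).trace := by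
    rw [choiReduced_eq_mul_conjTranspose, hT.eq, trace_partialTranspose_mul, sq]
  rw [htr, choiReduced_eq_mul_conjTranspose, hT.eq, ← sq, smul_pow, trace_smul, ← pow_mul,
    smul_eq_mul, inv_pow, div_eq_inv_mul]

end Bipartite

theorem even_renyi_negativity_eq_general {α β : Type*} [Fintype α] [Fintype β]
    [DecidableEq α] [DecidableEq β]
    (ρ : Matrix (α × β) (α × β) ℂ) (hρ : ρ.PosSemidef)
    (k : ℕ) (hk : 2 ≤ k) :
    Real.log (((partialTranspose ρ) ^ (2 * k)).trace.re) =
      -((k : ℝ) - 1) * renyiEntropy k (((choiReduced ρ).trace)⁻¹ • choiReduced ρ)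
        - (k : ℝ) * renyiEntropy 2 ρ := by
  rcases eq_or_ne ρ 0 with rfl | hρ0
  · simp [renyiEntropy, choiReduced_eq_mul_conjTranspose, zero_pow (by omega : 2 * k ≠ 0),
      zero_pow (by omega : k ≠ 0)]
  have hT0 : partialTranspose ρ ≠ 0 := fun h =>
    hρ0 (by simpa using congrArg partialTranspose h)
  have hN := Complex.pos_iff.1 ((isHermitian_partialTranspose hρ.1).trace_pow_two_mul_pos hT0 k)
  have hr : 0 < (ρ ^ 2).trace := by simpa using hρ.1.trace_pow_two_mul_pos hρ0 1
  rw [neg_sub_one_mul_renyiEntropy (by omega), renyiEntropy_two,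
    trace_normalized_choiReduced_pow hρ.1, Complex.eq_re_of_ofReal_le hr.le,
    ← Complex.ofReal_pow, Complex.div_ofReal_re,
    Real.log_div hN.1.ne' (pow_ne_zero _ (Complex.pos_iff.1 hr).1.ne'), Real.log_pow,
    Complex.ofReal_re]
  ring

/-- For a density matrix `ρ` on a bipartite system with `Tr ρ² > 0`, and
`σ̄ = (Tr ρ^{(2)})⁻¹ • ρ^{(2)}` the normalized Choi reduced matrix, the even
Rényi negativity satisfies, for every integer `k ≥ 2`,
`log Re Tr((ρ^{T_B})^{2k}) = −(k−1)·S_k(σ̄) − k·S₂(ρ)`. -/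
theorem even_renyi_negativity_eq {α β : Type*} [Fintype α] [Fintype β]
    [DecidableEq α] [DecidableEq β]
    (ρ : Matrix (α × β) (α × β) ℂ) (hρ : ρ.PosSemidef) (htr : ρ.trace = 1)
    (k : ℕ) (hk : 2 ≤ k) :
    Real.log (((partialTranspose ρ) ^ (2 * k)).trace.re) =
      -((k : ℝ) - 1) * renyiEntropy k (((choiReduced ρ).trace)⁻¹ • choiReduced ρ)
        - (k : ℝ) * renyiEntropy 2 ρ :=
  even_renyi_negativity_eq_general ρ hρ k hk
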